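/- Assume: (i) ∂_k u_1 = u_k' and 4·∂_{k+1}u_1 = u_k''' − 2u_1'u_k − 4u_1u_k' for 1 ≤ k ≤ g; (ii) ∂_i u_j = ∂_j u_i for all i, j; (iii) u_k'u_i − u_i'u_k + 2∂_{i+1}u_k − 2∂_{k+1}u_i = 0 for all i, k; and that equation (4mu) holds with real constants μ_1, …, μ_{2g}. Then for every smooth f : ℝ^g → ℝ one has the operator identity 4·(∑_{i=1}^g 𝓤_i ∘ 𝓛^{g−i})((∑_{j=1}^g 𝓤_j ∘ 𝓛^{g−j}) f) = 4·𝓛^{2g+1} f + ∑_{i=1}^{2g} μ_i · 𝓛^{2g−i} f, where 𝓛^m denotes m-fold composition of 𝓛. -/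

import Mathlib

/-!
Write `2 − 𝐮(ξ) = ∑ᵢ bᵢ ξⁱ` (so `b₀ = 2`) and `S_b = b ∂ₓ − ½ b'`. By the first half of (i) the
`∂_k`-terms of `∑ₖ 𝓤ₖ 𝓛^{g−k}` telescope, and this operator becomes `P = ½ ∑ᵢ S_{bᵢ} 𝓛^{g−i}`.
Since `[𝓛, S_b] = 2b'𝓛 + 2u₁b' + u₁'b − ½b'''`, the second half of (i) says exactly that `P`
commutes with `𝓛`, so `4P² = ∑_{i,j} S_{bᵢ} S_{bⱼ} 𝓛^{2g−i−j}`. Expanding `S_b S_c` and collecting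
powers of `𝓛` (with the functional `p ↦ ∑ₙ pₙ 𝓛^{2g+1−n} f (t)`, which turns these double sums
into products of polynomials in `ξ`), the antisymmetric part `b c' − b' c` drops out and the
coefficients are those of `ξ` times the left side of (4mu), which (4mu) identifies with
`16 + 4 ∑ μᵢ ξ^{i+1}`.
-/

open scoped BigOperators

/-- Partial derivative `∂_i` (1-based index) on functions of `t : Fin g → ℝ`;
`∂_i ≡ 0` for `i = 0` or `i > g` (in particular `∂_{g+1} ≡ 0`). -/
noncomputable def pd {g : ℕ} {E : Type*} [NormedAddCommGroup E] [NormedSpace ℝ E]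
    (i : ℕ) (f : (Fin g → ℝ) → E) : (Fin g → ℝ) → E :=
  fun t => if h : 1 ≤ i ∧ i ≤ g then
    fderiv ℝ f t (Pi.single (⟨i - 1, by omega⟩ : Fin g) 1) else 0

/-- The Schrödinger operator `𝓛 f = ∂_x² f − u₁·f`. -/
noncomputable def opL {g : ℕ} (u : ℕ → (Fin g → ℝ) → ℝ)
    (f : (Fin g → ℝ) → ℝ) : (Fin g → ℝ) → ℝ :=
  fun t => pd 1 (pd 1 f) t - u 1 t * f t

/-- `𝓐_k f = ∂_x²∂_k f − (1/2)(u₁·∂_k f + ∂_k(u₁·f)) − (1/4)(u_k·∂_x f + ∂_x(u_k·f))`. -/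
noncomputable def opA {g : ℕ} (u : ℕ → (Fin g → ℝ) → ℝ) (k : ℕ)
    (f : (Fin g → ℝ) → ℝ) : (Fin g → ℝ) → ℝ :=
  fun t => pd 1 (pd 1 (pd k f)) t
    - (1/2 : ℝ) * (u 1 t * pd k f t + pd k (fun s => u 1 s * f s) t)
    - (1/4 : ℝ) * (u k t * pd 1 f t + pd 1 (fun s => u k s * f s) t)

/-- `𝓤_k f = 𝓐_k f − ∂_{k+1} f` (so `𝓤_g = 𝓐_g` since `∂_{g+1} ≡ 0`). -/
noncomputable def opU {g : ℕ} (u : ℕ → (Fin g → ℝ) → ℝ) (k : ℕ)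
    (f : (Fin g → ℝ) → ℝ) : (Fin g → ℝ) → ℝ :=
  fun t => opA u k f t - pd (k+1) f t

/-- The generating function `𝐮(ξ) = ∑_{i=1}^g u_i ξ^i`. -/
noncomputable def bfu {g : ℕ} (u : ℕ → (Fin g → ℝ) → ℝ) (ξ : ℝ) :
    (Fin g → ℝ) → ℝ :=
  fun t => ∑ i ∈ Finset.Icc 1 g, u i t * ξ ^ i

/-- `𝐮'(ξ) = ∑_{i=1}^g u_i' ξ^i` (prime is `∂_x = ∂_1`). -/
noncomputable def bfu1 {g : ℕ} (u : ℕ → (Fin g → ℝ) → ℝ) (ξ : ℝ) :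
    (Fin g → ℝ) → ℝ :=
  fun t => ∑ i ∈ Finset.Icc 1 g, pd 1 (u i) t * ξ ^ i

/-- `𝐮''(ξ) = ∑_{i=1}^g u_i'' ξ^i`. -/
noncomputable def bfu2 {g : ℕ} (u : ℕ → (Fin g → ℝ) → ℝ) (ξ : ℝ) :
    (Fin g → ℝ) → ℝ :=
  fun t => ∑ i ∈ Finset.Icc 1 g, pd 1 (pd 1 (u i)) t * ξ ^ i

/-- `𝐮'''(ξ) = ∑_{i=1}^g u_i''' ξ^i`. -/
noncomputable def bfu3 {g : ℕ} (u : ℕ → (Fin g → ℝ) → ℝ) (ξ : ℝ) :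
    (Fin g → ℝ) → ℝ :=
  fun t => ∑ i ∈ Finset.Icc 1 g, pd 1 (pd 1 (pd 1 (u i))) t * ξ ^ i

/-- The operator `𝐔 = ∑_{i=1}^g 𝓤_i ∘ 𝓛^{g−i}` (i.e. `𝓤_1𝓛^{g−1} + … + 𝓤_g`). -/
noncomputable def ULop {g : ℕ} (u : ℕ → (Fin g → ℝ) → ℝ)
    (f : (Fin g → ℝ) → ℝ) : (Fin g → ℝ) → ℝ :=
  fun t => ∑ i ∈ Finset.Icc 1 g, opU u i ((opL u)^[g - i] f) t

open scoped ContDiff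
open Polynomial Finset

section PartialDerivative

variable {g : ℕ} {E : Type*} [NormedAddCommGroup E] [NormedSpace ℝ E] {i j : ℕ}

lemma pd_eq_zero_of_out_of_range (hi : ¬(1 ≤ i ∧ i ≤ g)) (f : (Fin g → ℝ) → E) : pd i f = 0 :=
  funext fun _ => dif_neg hi

lemma pd_const (c : E) : pd (g := g) i (fun _ => c) = 0 := by
  funext t; unfold pd; split_ifs <;> simp

lemma pd_zero : pd (g := g) i (0 : (Fin g → ℝ) → E) = 0 :=
  pd_const 0

lemma pd_add {f h : (Fin g → ℝ) → E} (hf : Differentiable ℝ f) (hh : Differentiable ℝ h) :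
    pd i (fun t => f t + h t) = fun t => pd i f t + pd i h t := by
  funext t; unfold pd; split_ifs <;> simp [fderiv_fun_add (hf t) (hh t)]

lemma pd_sub {f h : (Fin g → ℝ) → E} (hf : Differentiable ℝ f) (hh : Differentiable ℝ h) :
    pd i (fun t => f t - h t) = fun t => pd i f t - pd i h t := by
  funext t; unfold pd; split_ifs <;> simp [fderiv_fun_sub (hf t) (hh t)]

lemma pd_neg {f : (Fin g → ℝ) → E} : pd i (fun t => -f t) = fun t => -pd i f t := by
  funext t; unfold pd; split_ifs <;> simp

lemma pd_sum {ι : Type*} (s : Finset ι) {f : ι → (Fin g → ℝ) → E}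
    (hf : ∀ j ∈ s, Differentiable ℝ (f j)) :
    pd i (fun t => ∑ j ∈ s, f j t) = fun t => ∑ j ∈ s, pd i (f j) t := by
  funext t; unfold pd; split_ifs <;> simp [fderiv_fun_sum fun j hj => hf j hj t]

lemma pd_const_mul (c : ℝ) {f : (Fin g → ℝ) → ℝ} (hf : Differentiable ℝ f) :
    pd i (fun t => c * f t) = fun t => c * pd i f t := by
  funext t; unfold pd; split_ifs <;> simp [fderiv_const_mul (hf t)]

lemma pd_mul {f h : (Fin g → ℝ) → ℝ} (hf : Differentiable ℝ f) (hh : Differentiable ℝ h) :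
    pd i (fun t => f t * h t) = fun t => f t * pd i h t + pd i f t * h t := by
  funext t; unfold pd; split_ifs <;> simp [fderiv_fun_mul (hf t) (hh t), mul_comm]

@[fun_prop]
lemma contDiff_pd {f : (Fin g → ℝ) → E} (hf : ContDiff ℝ ∞ f) : ContDiff ℝ ∞ (pd i f) := by
  by_cases hi : 1 ≤ i ∧ i ≤ g
  · have : pd i f = fun t => fderiv ℝ f t (Pi.single (⟨i - 1, by omega⟩ : Fin g) 1) :=
      funext fun t => dif_pos hi
    rw [this]
    exact (hf.fderiv_right le_rfl).clm_apply contDiff_const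
  · rw [pd_eq_zero_of_out_of_range hi]
    exact contDiff_const

@[fun_prop]
lemma differentiable_pd {f : (Fin g → ℝ) → E} (hf : ContDiff ℝ ∞ f) :
    Differentiable ℝ (pd i f) :=
  (contDiff_pd hf).differentiable (by simp)

lemma pd_comm {f : (Fin g → ℝ) → E} (hf : ContDiff ℝ 2 f) : pd i (pd j f) = pd j (pd i f) := by
  funext t
  have hd2 : Differentiable ℝ (fderiv ℝ f) :=
    (hf.fderiv_right (m := 1) le_rfl).differentiable one_ne_zero
  have hsecond : ∀ (k l : ℕ) (hk : 1 ≤ k ∧ k ≤ g) (hl : 1 ≤ l ∧ l ≤ g), pd k (pd l f) t =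
      fderiv ℝ (fderiv ℝ f) t (Pi.single ⟨k - 1, by omega⟩ 1) (Pi.single ⟨l - 1, by omega⟩ 1) := by
    intro k l hk hl
    have : pd l f = fun s => fderiv ℝ f s (Pi.single (⟨l - 1, by omega⟩ : Fin g) 1) :=
      funext fun s => dif_pos hl
    rw [this]
    simp [pd, hk, fderiv_clm_apply (hd2 t) (differentiableAt_const _)]
  by_cases hi : 1 ≤ i ∧ i ≤ g
  · by_cases hj : 1 ≤ j ∧ j ≤ g
    · rw [hsecond i j hi hj, hsecond j i hj hi]
      exact hf.contDiffAt.isSymmSndFDerivAt (by simp) _ _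
    · rw [pd_eq_zero_of_out_of_range hj f, pd_eq_zero_of_out_of_range hj (pd i f), pd_zero]
  · rw [pd_eq_zero_of_out_of_range hi (pd j f), pd_eq_zero_of_out_of_range hi f, pd_zero]

end PartialDerivative

lemma sum_range_succ_eq_add_sum_Icc {M : Type*} [AddCommMonoid M] (F : ℕ → M) (n : ℕ) :
    ∑ i ∈ range (n + 1), F i = F 0 + ∑ i ∈ Icc 1 n, F i := by
  rw [range_eq_Ico, sum_eq_sum_Ico_succ_bot (by omega : 0 < n + 1), zero_add,
    Ico_add_one_right_eq_Icc]

noncomputable def coeffPoly (c : ℕ → ℝ) (n : ℕ) : ℝ[X] := ∑ i ∈ range n, C (c i) * X ^ i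

noncomputable def pairing (φ : ℕ → ℝ) : ℝ[X] →ₗ[ℝ] ℝ :=
  lsum fun n => LinearMap.toSpanSingleton ℝ ℝ (φ n)

section Pairing
variable (φ : ℕ → ℝ)

lemma pairing_monomial (n : ℕ) (a : ℝ) : pairing φ (monomial n a) = a * φ n := by
  simp [pairing, sum_monomial_index]

lemma pairing_C_mul_X_pow (a : ℝ) (n : ℕ) : pairing φ (C a * X ^ n) = a * φ n := by
  rw [C_mul_X_pow_eq_monomial, pairing_monomial]

lemma pairing_C (a : ℝ) : pairing φ (C a) = a * φ 0 := by
  simpa using pairing_C_mul_X_pow φ a 0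

lemma pairing_C_mul (a : ℝ) (p : ℝ[X]) : pairing φ (C a * p) = a * pairing φ p := by
  rw [C_mul', map_smul, smul_eq_mul]

lemma pairing_X_mul (p : ℝ[X]) : pairing φ (X * p) = pairing (fun n => φ (n + 1)) p := by
  induction p using Polynomial.induction_on' with
  | add p q hp hq => rw [mul_add, map_add, map_add, hp, hq]
  | monomial n a => rw [X_mul_monomial, pairing_monomial, pairing_monomial]

lemma pairing_coeffPoly_mul (a b : ℕ → ℝ) (n : ℕ) :
    pairing φ (coeffPoly a n * coeffPoly b n)
      = ∑ i ∈ range n, ∑ j ∈ range n, a i * b j * φ (i + j) := by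
  simp only [coeffPoly, sum_mul_sum, map_sum]
  refine sum_congr rfl fun i _ => sum_congr rfl fun j _ => ?_
  rw [show C (a i) * X ^ i * (C (b j) * X ^ j) = C (a i * b j) * X ^ (i + j) by
    rw [map_mul, pow_add]; ring, pairing_C_mul_X_pow]

lemma eval_coeffPoly (c : ℕ → ℝ) (n : ℕ) (ξ : ℝ) :
    (coeffPoly c n).eval ξ = ∑ i ∈ range n, c i * ξ ^ i := by
  simp [coeffPoly, eval_finsetSum]

end Pairing

section Operators

variable {g : ℕ} {u : ℕ → (Fin g → ℝ) → ℝ} {f h b c : (Fin g → ℝ) → ℝ}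

@[fun_prop]
lemma contDiff_opL (hu1 : ContDiff ℝ ∞ (u 1)) (hf : ContDiff ℝ ∞ f) :
    ContDiff ℝ ∞ (opL u f) := by
  unfold opL; fun_prop

@[fun_prop]
lemma contDiff_iterate_opL (hu1 : ContDiff ℝ ∞ (u 1)) (hf : ContDiff ℝ ∞ f) (n : ℕ) :
    ContDiff ℝ ∞ ((opL u)^[n] f) := by
  induction n with
  | zero => exact hf
  | succ n ih => rw [Function.iterate_succ_apply']; exact contDiff_opL hu1 ih

lemma opL_const_mul_sum {ι : Type*} (s : Finset ι) (c : ℝ) {h : ι → (Fin g → ℝ) → ℝ}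
    (hh : ∀ j ∈ s, ContDiff ℝ ∞ (h j)) :
    opL u (fun t => c * ∑ j ∈ s, h j t) = fun t => c * ∑ j ∈ s, opL u (h j) t := by
  have hd : ∀ j ∈ s, Differentiable ℝ (h j) := fun j hj => (hh j hj).differentiable (by simp)
  have hd1 : ∀ j ∈ s, Differentiable ℝ (pd 1 (h j)) := fun j hj => differentiable_pd (hh j hj)
  funext t
  rw [opL, pd_const_mul c (Differentiable.fun_sum hd), pd_sum s hd,
    pd_const_mul c (Differentiable.fun_sum hd1), pd_sum s hd1]
  simp only [opL, mul_sum, ← sum_sub_distrib]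
  exact sum_congr rfl fun j _ => by ring

noncomputable def opS (b h : (Fin g → ℝ) → ℝ) : (Fin g → ℝ) → ℝ :=
  fun t => b t * pd 1 h t - 2⁻¹ * pd 1 b t * h t

@[fun_prop]
lemma contDiff_opS (hb : ContDiff ℝ ∞ b) (hh : ContDiff ℝ ∞ h) : ContDiff ℝ ∞ (opS b h) := by
  unfold opS; fun_prop

lemma opS_const_mul_sum {ι : Type*} (s : Finset ι) (c : ℝ) {h : ι → (Fin g → ℝ) → ℝ}
    (hh : ∀ j ∈ s, Differentiable ℝ (h j)) :
    opS b (fun t => c * ∑ j ∈ s, h j t) = fun t => c * ∑ j ∈ s, opS b (h j) t := by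
  funext t
  rw [opS, pd_const_mul c (Differentiable.fun_sum hh), pd_sum s hh]
  simp only [opS, mul_sum, ← sum_sub_distrib]
  exact sum_congr rfl fun j _ => by ring

lemma opL_opS (hu1 : ContDiff ℝ ∞ (u 1)) (hb : ContDiff ℝ ∞ b) (hh : ContDiff ℝ ∞ h) :
    opL u (opS b h) = fun t => opS b (opL u h) t + 2 * pd 1 b t * opL u h t
      + (2 * u 1 t * pd 1 b t + pd 1 (u 1) t * b t - 2⁻¹ * pd 1 (pd 1 (pd 1 b)) t) * h t := by
  funext t
  unfold opL opS
  simp (disch := fun_prop (disch := simp)) only [pd_add, pd_sub, pd_mul, pd_const, Pi.zero_apply]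
  ring

lemma four_mul_opS_opS (hc : ContDiff ℝ ∞ c) (hh : ContDiff ℝ ∞ h)
    (t : Fin g → ℝ) :
    4 * opS b (opS c h) t = 4 * b t * c t * pd 1 (pd 1 h) t
      + 2 * (b t * pd 1 c t - pd 1 b t * c t) * pd 1 h t
      + (pd 1 b t * pd 1 c t - 2 * b t * pd 1 (pd 1 c) t) * h t := by
  unfold opS
  simp (disch := fun_prop (disch := simp)) only [pd_sub, pd_mul, pd_const, Pi.zero_apply]
  ring

end Operators

section NormalForm

variable {g : ℕ} {u : ℕ → (Fin g → ℝ) → ℝ} {f : (Fin g → ℝ) → ℝ} {i k : ℕ}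

/-- The coefficients of `2 − 𝐮(ξ) = ∑ᵢ bᵢ ξⁱ`. -/
noncomputable def bcoeff (u : ℕ → (Fin g → ℝ) → ℝ) (i : ℕ) : (Fin g → ℝ) → ℝ :=
  if i = 0 then fun _ => 2 else if i ≤ g then fun t => -u i t else fun _ => 0

lemma bcoeff_zero : bcoeff u 0 = fun _ => 2 := rfl

lemma bcoeff_of_le (hi : 1 ≤ i) (hig : i ≤ g) : bcoeff u i = fun t => -u i t := by
  simp [bcoeff, show i ≠ 0 by omega, hig]

lemma bcoeff_of_lt (hgi : g < i) : bcoeff u i = 0 := by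
  simp [bcoeff, show i ≠ 0 by omega, show ¬i ≤ g by omega]
  rfl

@[fun_prop]
lemma contDiff_bcoeff (hu : ContDiff ℝ ∞ (u i)) : ContDiff ℝ ∞ (bcoeff u i) := by
  unfold bcoeff; split_ifs <;> fun_prop

lemma pd_one_bcoeff_succ (hc1 : ∀ k, 1 ≤ k → k ≤ g → ∀ t, pd k (u 1) t = pd 1 (u k) t) (k : ℕ) :
    pd 1 (bcoeff u (k + 1)) = fun t => -pd (k + 1) (u 1) t := by
  funext t
  by_cases hk : k + 1 ≤ g
  · rw [bcoeff_of_le (by omega) hk, pd_neg, hc1 (k + 1) (by omega) hk]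
  · rw [bcoeff_of_lt (by omega), pd_zero, pd_eq_zero_of_out_of_range (by omega)]
    simp

lemma commutator_coeff_eq_zero (hc1 : ∀ k, 1 ≤ k → k ≤ g → ∀ t, pd k (u 1) t = pd 1 (u k) t)
    (hc2 : ∀ k, 1 ≤ k → k ≤ g → ∀ t, 4 * pd (k + 1) (u 1) t
      = pd 1 (pd 1 (pd 1 (u k))) t - 2 * pd 1 (u 1) t * u k t - 4 * u 1 t * pd 1 (u k) t)
    (hig : i ≤ g) (t : Fin g → ℝ) :
    2 * pd 1 (bcoeff u (i + 1)) t + (2 * u 1 t * pd 1 (bcoeff u i) t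
      + pd 1 (u 1) t * bcoeff u i t - 2⁻¹ * pd 1 (pd 1 (pd 1 (bcoeff u i))) t) = 0 := by
  rw [pd_one_bcoeff_succ hc1]
  rcases Nat.eq_zero_or_pos i with rfl | hi
  · simp only [bcoeff_zero, pd_const, pd_zero, Pi.zero_apply]
    ring
  · rw [bcoeff_of_le hi hig]
    simp only [pd_neg]
    linear_combination (-2⁻¹ : ℝ) * hc2 i hi hig t

noncomputable def opP (u : ℕ → (Fin g → ℝ) → ℝ) (f : (Fin g → ℝ) → ℝ) : (Fin g → ℝ) → ℝ :=
  fun t => 2⁻¹ * ∑ i ∈ range (g + 1), opS (bcoeff u i) ((opL u)^[g - i] f) t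

lemma contDiff_opP (hu : ∀ i, ContDiff ℝ ∞ (u i)) (hf : ContDiff ℝ ∞ f) :
    ContDiff ℝ ∞ (opP u f) := by
  have := hu 1
  unfold opP
  refine contDiff_const.mul (ContDiff.sum fun i _ => ?_)
  have := hu i
  fun_prop

lemma opU_eq (hu1 : ContDiff ℝ ∞ (u 1)) (huk : ContDiff ℝ ∞ (u k)) (hk : 1 ≤ k) (hkg : k ≤ g)
    (hc1 : ∀ t, pd k (u 1) t = pd 1 (u k) t) {h : (Fin g → ℝ) → ℝ} (hh : ContDiff ℝ ∞ h) :
    opU u k h = fun t => pd k (opL u h) t - pd (k + 1) h t + 2⁻¹ * opS (bcoeff u k) h t := by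
  funext t
  rw [bcoeff_of_le hk hkg]
  unfold opU opA opL opS
  simp (disch := fun_prop (disch := simp)) only [pd_sub, pd_mul, pd_neg]
  rw [pd_comm (hh.of_le (by decide)),
    pd_comm (i := 1) (j := k) ((contDiff_pd hh).of_le (by decide)), hc1 t]
  ring

lemma ULop_eq_opP (hu : ∀ i, ContDiff ℝ ∞ (u i))
    (hc1 : ∀ k, 1 ≤ k → k ≤ g → ∀ t, pd k (u 1) t = pd 1 (u k) t) (hf : ContDiff ℝ ∞ f) :
    ULop u f = opP u f := by
  funext t
  set a : ℕ → ℝ := fun k => pd k ((opL u)^[g + 1 - k] f) t with ha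
  have hterm : ∀ k ∈ Icc 1 g, opU u k ((opL u)^[g - k] f) t
      = -(a (k + 1) - a k) + 2⁻¹ * opS (bcoeff u k) ((opL u)^[g - k] f) t := by
    intro k hk
    obtain ⟨hk1, hkg⟩ := mem_Icc.mp hk
    rw [opU_eq (hu 1) (hu k) hk1 hkg (hc1 k hk1 hkg) (contDiff_iterate_opL (hu 1) hf _),
      ← Function.iterate_succ_apply' (opL u)]
    simp only [ha, show g + 1 - k = g - k + 1 by omega, show g + 1 - (k + 1) = g - k by omega]
    ring
  have htelescope : ∑ k ∈ Icc 1 g, (a (k + 1) - a k) = -pd 1 ((opL u)^[g] f) t := by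
    rw [← Ico_add_one_right_eq_Icc, sum_Ico_sub a (by omega), ha]
    simp [pd_eq_zero_of_out_of_range (g := g) (i := g + 1) (by omega)]
  rw [ULop, sum_congr rfl hterm, sum_add_distrib, sum_neg_distrib, htelescope, opP,
    sum_range_succ_eq_add_sum_Icc, mul_add, ← mul_sum]
  simp [opS, bcoeff_zero, pd_const]

lemma opL_opP (hu : ∀ i, ContDiff ℝ ∞ (u i))
    (hc1 : ∀ k, 1 ≤ k → k ≤ g → ∀ t, pd k (u 1) t = pd 1 (u k) t)
    (hc2 : ∀ k, 1 ≤ k → k ≤ g → ∀ t, 4 * pd (k + 1) (u 1) t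
      = pd 1 (pd 1 (pd 1 (u k))) t - 2 * pd 1 (u 1) t * u k t - 4 * u 1 t * pd 1 (u k) t)
    (hf : ContDiff ℝ ∞ f) :
    opL u (opP u f) = opP u (opL u f) := by
  have hu1 := hu 1
  funext t
  set ψ : ℕ → ℝ := fun m => (opL u)^[m] f t with hψ
  set F : ℕ → ℝ := fun i => 2 * pd 1 (bcoeff u i) t * ψ (g + 1 - i) with hF
  have hsplit : ∀ i ∈ range (g + 1), opL u (opS (bcoeff u i) ((opL u)^[g - i] f)) t
      = opS (bcoeff u i) ((opL u)^[g - i] (opL u f)) t + (F i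
        + (2 * u 1 t * pd 1 (bcoeff u i) t + pd 1 (u 1) t * bcoeff u i t
          - 2⁻¹ * pd 1 (pd 1 (pd 1 (bcoeff u i))) t) * ψ (g - i)) := by
    intro i hi
    have hig : g + 1 - i = g - i + 1 := by have := mem_range.mp hi; omega
    rw [opL_opS hu1 (contDiff_bcoeff (hu i)) (contDiff_iterate_opL hu1 hf _),
      ← Function.iterate_succ_apply, ← Function.iterate_succ_apply' (opL u)]
    simp only [hF, hψ, hig]
    ring
  have hshift : ∑ i ∈ range (g + 1), F i = ∑ i ∈ range (g + 1), F (i + 1) := by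
    rw [sum_range_succ', sum_range_succ (fun i => F (i + 1))]
    simp [hF, bcoeff_zero, bcoeff_of_lt (lt_add_one g), pd_const, pd_zero]
  have hcancel : ∑ i ∈ range (g + 1), (F (i + 1)
      + (2 * u 1 t * pd 1 (bcoeff u i) t + pd 1 (u 1) t * bcoeff u i t
        - 2⁻¹ * pd 1 (pd 1 (pd 1 (bcoeff u i))) t) * ψ (g - i)) = 0 := by
    refine sum_eq_zero fun i hi => ?_
    simp only [hF, Nat.add_sub_add_right]
    linear_combination ψ (g - i) * commutator_coeff_eq_zero hc1 hc2 (Nat.lt_succ_iff.mp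
      (mem_range.mp hi)) t
  unfold opP
  rw [opL_const_mul_sum _ _ fun i _ => contDiff_opS (contDiff_bcoeff (hu i))
    (contDiff_iterate_opL hu1 hf _)]
  beta_reduce
  rw [sum_congr rfl hsplit, sum_add_distrib, sum_add_distrib,
    hshift, ← sum_add_distrib, hcancel, add_zero]

lemma iterate_opL_opP (hu1 : ContDiff ℝ ∞ (u 1))
    (hcomm : ∀ h, ContDiff ℝ ∞ h → opL u (opP u h) = opP u (opL u h))
    (hf : ContDiff ℝ ∞ f) (n : ℕ) :
    (opL u)^[n] (opP u f) = opP u ((opL u)^[n] f) := by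
  induction n with
  | zero => rfl
  | succ n ih =>
    rw [Function.iterate_succ_apply', ih, hcomm _ (contDiff_iterate_opL hu1 hf n),
      Function.iterate_succ_apply']

lemma four_mul_opP_opP (hu : ∀ i, ContDiff ℝ ∞ (u i))
    (hcomm : ∀ h, ContDiff ℝ ∞ h → opL u (opP u h) = opP u (opL u h))
    (hf : ContDiff ℝ ∞ f) (t : Fin g → ℝ) :
    4 * opP u (opP u f) t = ∑ i ∈ range (g + 1), ∑ j ∈ range (g + 1),
      opS (bcoeff u i) (opS (bcoeff u j) ((opL u)^[2 * g - (i + j)] f)) t := by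
  have hu1 := hu 1
  have hterm : ∀ i ∈ range (g + 1), opS (bcoeff u i) ((opL u)^[g - i] (opP u f)) t
      = 2⁻¹ * ∑ j ∈ range (g + 1),
        opS (bcoeff u i) (opS (bcoeff u j) ((opL u)^[2 * g - (i + j)] f)) t := by
    intro i hi
    rw [iterate_opL_opP hu1 hcomm hf]
    unfold opP
    rw [opS_const_mul_sum]
    · congr! 3 with j hj
      rw [← Function.iterate_add_apply]
      congr 2
      have := mem_range.mp hi; have := mem_range.mp hj; omega
    · intro j _
      have := hu j
      fun_prop (disch := simp)
  rw [opP, sum_congr rfl hterm, ← mul_sum]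
  ring

end NormalForm

section GeneratingPolynomial

variable {g : ℕ} {u : ℕ → (Fin g → ℝ) → ℝ} {f : (Fin g → ℝ) → ℝ}

noncomputable def bpoly (u : ℕ → (Fin g → ℝ) → ℝ) (k : ℕ) (t : Fin g → ℝ) : ℝ[X] :=
  coeffPoly (fun i => (pd 1)^[k] (bcoeff u i) t) (g + 1)

/-- `ξ` times the left-hand side of (4mu), as a polynomial in `ξ`. -/
noncomputable def fourMuPoly (u : ℕ → (Fin g → ℝ) → ℝ) (t : Fin g → ℝ) : ℝ[X] :=
  C 4 * (bpoly u 0 t * bpoly u 0 t) + X * (C (4 * u 1 t) * (bpoly u 0 t * bpoly u 0 t)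
    - C 2 * (bpoly u 0 t * bpoly u 2 t) + bpoly u 1 t * bpoly u 1 t)

lemma iterate_pd_neg (k : ℕ) (h : (Fin g → ℝ) → ℝ) :
    (pd 1)^[k] (fun t => -h t) = fun t => -(pd 1)^[k] h t := by
  induction k with
  | zero => rfl
  | succ k ih => rw [Function.iterate_succ_apply', ih, pd_neg, Function.iterate_succ_apply']

lemma eval_bpoly (k : ℕ) (t : Fin g → ℝ) (ξ : ℝ) :
    (bpoly u k t).eval ξ
      = (pd 1)^[k] (fun _ => (2 : ℝ)) t - ∑ i ∈ Icc 1 g, (pd 1)^[k] (u i) t * ξ ^ i := by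
  rw [bpoly, eval_coeffPoly, sum_range_succ_eq_add_sum_Icc, bcoeff_zero, pow_zero, mul_one,
    sub_eq_add_neg, ← sum_neg_distrib]
  refine congrArg _ (sum_congr rfl fun i hi => ?_)
  obtain ⟨hi1, hig⟩ := mem_Icc.mp hi
  rw [bcoeff_of_le hi1 hig, iterate_pd_neg, neg_mul]

lemma fourMuPoly_eq (μ : ℕ → ℝ) (t : Fin g → ℝ)
    (h4mu : ∀ ξ : ℝ, ξ ≠ 0 →
      bfu1 u ξ t ^ 2 + 2 * bfu2 u ξ t * (2 - bfu u ξ t)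
        + 4 * (ξ⁻¹ + u 1 t) * (2 - bfu u ξ t) ^ 2
      = 16 * ξ⁻¹ + 4 * ∑ i ∈ Icc 1 (2 * g), μ i * ξ ^ i) :
    fourMuPoly u t = C 16 + ∑ i ∈ Icc 1 (2 * g), C (4 * μ i) * X ^ (i + 1) := by
  refine eq_of_infinite_eval_eq _ _
    ((Set.finite_singleton 0).infinite_compl.mono fun ξ (hξ : ξ ≠ 0) => ?_)
  have hsum : ∑ i ∈ Icc 1 (2 * g), 4 * μ i * ξ ^ (i + 1)
      = 4 * ξ * ∑ i ∈ Icc 1 (2 * g), μ i * ξ ^ i := by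
    rw [mul_sum]
    exact sum_congr rfl fun i _ => by ring
  simp only [Set.mem_ofPred_eq, fourMuPoly, eval_add, eval_sub, eval_mul, eval_C, eval_X,
    eval_finsetSum, eval_pow, eval_bpoly, Function.iterate_succ_apply',
    Function.iterate_zero_apply, pd_const, pd_zero, Pi.zero_apply, hsum]
  have := h4mu ξ hξ
  simp only [bfu, bfu1, bfu2] at this
  linear_combination ξ * this
    - (4 * (2 - ∑ i ∈ Icc 1 g, u i t * ξ ^ i) ^ 2 - 16) * mul_inv_cancel₀ hξ

lemma sixteen_mul_opP_opP (hu : ∀ i, ContDiff ℝ ∞ (u i))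
    (hcomm : ∀ h, ContDiff ℝ ∞ h → opL u (opP u h) = opP u (opL u h))
    (hf : ContDiff ℝ ∞ f) (t : Fin g → ℝ) :
    16 * opP u (opP u f) t = pairing (fun n => (opL u)^[2 * g + 1 - n] f t) (fourMuPoly u t) := by
  have hu1 := hu 1
  set q := bpoly u 0 t
  set φ' : ℕ → ℝ := fun n => pd 1 ((opL u)^[2 * g - n] f) t
  calc 16 * opP u (opP u f) t
      = pairing (fun n => (opL u)^[2 * g + 1 - n] f t) (fourMuPoly u t)
        + 2 * pairing φ' (q * bpoly u 1 t - bpoly u 1 t * q) := by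
        rw [show (16 : ℝ) = 4 * 4 by norm_num, mul_assoc, four_mul_opP_opP hu hcomm hf t]
        simp only [fourMuPoly, q, bpoly, map_add, map_sub, pairing_C_mul, pairing_X_mul,
          pairing_coeffPoly_mul, mul_sum, ← sum_add_distrib, ← sum_sub_distrib]
        refine sum_congr rfl fun i hi => sum_congr rfl fun j hj => ?_
        have hij : 2 * g + 1 - (i + j) = 2 * g - (i + j) + 1 := by
          have := mem_range.mp hi; have := mem_range.mp hj; omega
        rw [four_mul_opS_opS (contDiff_bcoeff (hu j)) (contDiff_iterate_opL hu1 hf _)]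
        simp only [φ', hij, Nat.add_sub_add_right, Function.iterate_succ_apply', opL,
          Function.iterate_zero_apply]
        ring
    _ = _ := by rw [mul_comm q (bpoly u 1 t), sub_self, map_zero, mul_zero, add_zero]

end GeneratingPolynomial

theorem statement6_general (g : ℕ) (u : ℕ → (Fin g → ℝ) → ℝ)
    (hu : ∀ i, ContDiff ℝ (⊤ : ℕ∞) (u i))
    (hcond1 : ∀ k, 1 ≤ k → k ≤ g → ∀ t, pd k (u 1) t = pd 1 (u k) t)
    (hcond2 : ∀ k, 1 ≤ k → k ≤ g → ∀ t,
      4 * pd (k+1) (u 1) t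
        = pd 1 (pd 1 (pd 1 (u k))) t - 2 * pd 1 (u 1) t * u k t - 4 * u 1 t * pd 1 (u k) t)
    (μ : ℕ → ℝ)
    (h4mu : ∀ t, ∀ ξ : ℝ, ξ ≠ 0 →
      bfu1 u ξ t ^ 2 + 2 * bfu2 u ξ t * (2 - bfu u ξ t)
        + 4 * (ξ⁻¹ + u 1 t) * (2 - bfu u ξ t) ^ 2
      = 16 * ξ⁻¹ + 4 * ∑ i ∈ Finset.Icc 1 (2*g), μ i * ξ ^ i) :
    ∀ f : (Fin g → ℝ) → ℝ, ContDiff ℝ (⊤ : ℕ∞) f → ∀ t,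
      4 * ULop u (ULop u f) t
        = 4 * ((opL u)^[2*g + 1] f) t
          + ∑ i ∈ Finset.Icc 1 (2*g), μ i * ((opL u)^[2*g - i] f) t := by
  intro f hf t
  have h16 := sixteen_mul_opP_opP hu (fun h hh => opL_opP hu hcond1 hcond2 hh) hf t
  rw [fourMuPoly_eq μ t (h4mu t), map_add, pairing_C, map_sum] at h16
  simp only [pairing_C_mul_X_pow, Nat.add_sub_add_right, Nat.sub_zero, mul_assoc, ← mul_sum] at h16
  rw [ULop_eq_opP hu hcond1 hf, ULop_eq_opP hu hcond1 (contDiff_opP hu hf)]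
  linarith

/-- Under conditions (i), (ii), (iii) and equation (4mu) with real
constants `μ_1, …, μ_{2g}`, for every smooth `f` one has the operator identity
`4·𝐔(𝐔 f) = 4·𝓛^{2g+1} f + ∑_{i=1}^{2g} μ_i·𝓛^{2g−i} f` where `𝐔 = ∑ 𝓤_i∘𝓛^{g−i}`. -/
theorem statement6 (g : ℕ) (hg : 1 ≤ g) (u : ℕ → (Fin g → ℝ) → ℝ)
    (hu : ∀ i, ContDiff ℝ (⊤ : ℕ∞) (u i))
    (hcond1 : ∀ k, 1 ≤ k → k ≤ g → ∀ t, pd k (u 1) t = pd 1 (u k) t)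
    (hcond2 : ∀ k, 1 ≤ k → k ≤ g → ∀ t,
      4 * pd (k+1) (u 1) t
        = pd 1 (pd 1 (pd 1 (u k))) t - 2 * pd 1 (u 1) t * u k t - 4 * u 1 t * pd 1 (u k) t)
    (hcond3 : ∀ i, 1 ≤ i → i ≤ g → ∀ j, 1 ≤ j → j ≤ g → ∀ t, pd i (u j) t = pd j (u i) t)
    (hcond4 : ∀ i, 1 ≤ i → i ≤ g → ∀ k, 1 ≤ k → k ≤ g → ∀ t,
      pd 1 (u k) t * u i t - pd 1 (u i) t * u k t
        + 2 * pd (i+1) (u k) t - 2 * pd (k+1) (u i) t = 0)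
    (μ : ℕ → ℝ)
    (h4mu : ∀ t, ∀ ξ : ℝ, ξ ≠ 0 →
      bfu1 u ξ t ^ 2 + 2 * bfu2 u ξ t * (2 - bfu u ξ t)
        + 4 * (ξ⁻¹ + u 1 t) * (2 - bfu u ξ t) ^ 2
      = 16 * ξ⁻¹ + 4 * ∑ i ∈ Finset.Icc 1 (2*g), μ i * ξ ^ i) :
    ∀ f : (Fin g → ℝ) → ℝ, ContDiff ℝ (⊤ : ℕ∞) f → ∀ t,
      4 * ULop u (ULop u f) t
        = 4 * ((opL u)^[2*g + 1] f) t
          + ∑ i ∈ Finset.Icc 1 (2*g), μ i * ((opL u)^[2*g - i] f) t :=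
  statement6_general g u hu hcond1 hcond2 μ h4mu
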